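/- Let U ⊆ ℂ be open, H₀ ≠ 0 a real constant, ω : U → ℂ smooth with ∂̄ω nowhere zero, and X : U → ℝ³ smooth with ∂X = (∂ω̄)/(H₀(1+|ω|²)²)·(ω²−1, i(1+ω²), −2ω). Let n_ω := (2 Re ω, −2 Im ω, |ω|²−1)/(1+|ω|²) be the unit normal. Then the squared norm of the skew curvature satisfies K_{zz}·K_{z̄z̄} := (∂∂X·n_ω)·(∂̄∂̄X·n_ω) = (4/H₀²)·|∂ω|²|∂̄ω|²/(1+|ω|²)⁴ = 2·(∂X·∂̄X)·e^{φ₂}, where e^{φ₂} := (∂ω)(∂̄ω̄)/(1+|ω|²)². -/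

import Mathlib

open Complex

noncomputable section

/-- Wirtinger derivative `∂f = ½(∂ₓf − i ∂_yf)`. -/
def wirt {E : Type*} [NormedAddCommGroup E] [NormedSpace ℂ E] (f : ℂ → E) (z : ℂ) : E :=
  (2 : ℂ)⁻¹ • (fderiv ℝ f z 1 - Complex.I • fderiv ℝ f z Complex.I)

/-- Conjugate Wirtinger derivative `∂̄f = ½(∂ₓf + i ∂_yf)`. -/
def wirtb {E : Type*} [NormedAddCommGroup E] [NormedSpace ℂ E] (f : ℂ → E) (z : ℂ) : E :=
  (2 : ℂ)⁻¹ • (fderiv ℝ f z 1 + Complex.I • fderiv ℝ f z Complex.I)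

/-- Complex-bilinear dot product on ℂ³. -/
def cdot3 (a b : Fin 3 → ℂ) : ℂ := ∑ i, a i * b i

/-- Embedding ℝ³ ↪ ℂ³. -/
def toC3 (v : Fin 3 → ℝ) : Fin 3 → ℂ := fun i => (v i : ℂ)

/-- Euclidean norm on ℝ³. -/
def rnorm3 (v : Fin 3 → ℝ) : ℝ := Real.sqrt (∑ i, v i ^ 2)

/-- The Kemmotsu data `Φ = (∂ω̄)/(H(1+|ω|²)²) · (ω²−1, i(1+ω²), −2ω)`. -/
def kemPhi (H : ℂ → ℝ) (ω : ℂ → ℂ) (z : ℂ) : Fin 3 → ℂ :=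
  (wirt (fun w => (starRingEnd ℂ) (ω w)) z /
      ((H z : ℂ) * (1 + (Complex.normSq (ω z) : ℂ)) ^ 2)) •
    ![ω z ^ 2 - 1, Complex.I * (1 + ω z ^ 2), -2 * ω z]

/-- The vector `n_ω = (2 Re ω, −2 Im ω, |ω|²−1)/(1+|ω|²)` on the unit sphere. -/
def gaussNormal (w : ℂ) : Fin 3 → ℝ :=
  (1 + Complex.normSq w)⁻¹ • ![2 * w.re, -2 * w.im, Complex.normSq w - 1]


lemma wirt_congr {E : Type*} [NormedAddCommGroup E] [NormedSpace ℂ E] {f g : ℂ → E} {z : ℂ}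
    (h : f =ᶠ[nhds z] g) : wirt f z = wirt g z := by
  unfold wirt; rw [h.fderiv_eq]

lemma wirtb_congr {E : Type*} [NormedAddCommGroup E] [NormedSpace ℂ E] {f g : ℂ → E} {z : ℂ}
    (h : f =ᶠ[nhds z] g) : wirtb f z = wirtb g z := by
  unfold wirtb; rw [h.fderiv_eq]

lemma wirt_pi {f : ℂ → Fin 3 → ℂ} {z : ℂ} (hf : DifferentiableAt ℝ f z) (i : Fin 3) :
    wirt f z i = wirt (fun w => f w i) z := by
  have h : fderiv ℝ (fun w => f w i) z =
      (ContinuousLinearMap.proj (R := ℝ) (φ := fun _ : Fin 3 => ℂ) i).comp (fderiv ℝ f z) :=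
    (((ContinuousLinearMap.proj (R := ℝ) (φ := fun _ : Fin 3 => ℂ) i).hasFDerivAt).comp z
      hf.hasFDerivAt).fderiv
  simp [wirt, h]

lemma wirtb_pi {f : ℂ → Fin 3 → ℂ} {z : ℂ} (hf : DifferentiableAt ℝ f z) (i : Fin 3) :
    wirtb f z i = wirtb (fun w => f w i) z := by
  have h : fderiv ℝ (fun w => f w i) z =
      (ContinuousLinearMap.proj (R := ℝ) (φ := fun _ : Fin 3 => ℂ) i).comp (fderiv ℝ f z) :=
    (((ContinuousLinearMap.proj (R := ℝ) (φ := fun _ : Fin 3 => ℂ) i).hasFDerivAt).comp z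
      hf.hasFDerivAt).fderiv
  simp [wirtb, h]

lemma wirt_mul {f g : ℂ → ℂ} {z : ℂ} (hf : DifferentiableAt ℝ f z)
    (hg : DifferentiableAt ℝ g z) :
    wirt (fun w => f w * g w) z = f z * wirt g z + g z * wirt f z := by
  simp only [wirt, fderiv_fun_mul hf hg]
  simp [smul_eq_mul]; ring

lemma wirt_conj (f : ℂ → ℂ) (z : ℂ) :
    wirt (fun w => (starRingEnd ℂ) (f w)) z = (starRingEnd ℂ) (wirtb f z) := by
  have h : fderiv ℝ (fun w => (starRingEnd ℂ) (f w)) z =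
      (Complex.conjCLE : ℂ →L[ℝ] ℂ).comp (fderiv ℝ f z) :=
    Complex.conjCLE.comp_fderiv (f := f) (x := z)
  simp only [wirt, wirtb, h, ContinuousLinearMap.comp_apply]
  simp [Complex.conjCLE_apply, map_add, map_mul, map_inv₀, map_ofNat, Complex.conj_I, smul_eq_mul]
  ring

lemma wirtb_conj (f : ℂ → ℂ) (z : ℂ) :
    wirtb (fun w => (starRingEnd ℂ) (f w)) z = (starRingEnd ℂ) (wirt f z) := by
  have h : fderiv ℝ (fun w => (starRingEnd ℂ) (f w)) z =
      (Complex.conjCLE : ℂ →L[ℝ] ℂ).comp (fderiv ℝ f z) :=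
    Complex.conjCLE.comp_fderiv (f := f) (x := z)
  simp only [wirt, wirtb, h, ContinuousLinearMap.comp_apply]
  simp [Complex.conjCLE_apply, map_sub, map_mul, map_inv₀, map_ofNat, Complex.conj_I, smul_eq_mul]

lemma wirt_const (c : ℂ) (z : ℂ) : wirt (fun _ => c) z = 0 := by
  simp [wirt]

lemma wirt_add {f g : ℂ → ℂ} {z : ℂ} (hf : DifferentiableAt ℝ f z)
    (hg : DifferentiableAt ℝ g z) :
    wirt (fun w => f w + g w) z = wirt f z + wirt g z := by
  simp only [wirt, fderiv_fun_add hf hg]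
  simp [smul_eq_mul]; ring

lemma wirt_sub {f g : ℂ → ℂ} {z : ℂ} (hf : DifferentiableAt ℝ f z)
    (hg : DifferentiableAt ℝ g z) :
    wirt (fun w => f w - g w) z = wirt f z - wirt g z := by
  simp only [wirt, fderiv_fun_sub hf hg]
  simp [smul_eq_mul]; ring

lemma wirt_const_mul {f : ℂ → ℂ} {z : ℂ} (c : ℂ) (hf : DifferentiableAt ℝ f z) :
    wirt (fun w => c * f w) z = c * wirt f z := by
  rw [wirt_mul (differentiableAt_const c) hf, wirt_const]; ring

lemma wirtb_real (f : ℂ → ℝ) (z : ℂ) :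
    wirtb (fun w => ((f w : ℝ) : ℂ)) z = (starRingEnd ℂ) (wirt (fun w => ((f w : ℝ) : ℂ)) z) := by
  have : (fun w => ((f w : ℝ) : ℂ)) = fun w => (starRingEnd ℂ) ((f w : ℝ) : ℂ) := by
    funext w; rw [Complex.conj_ofReal]
  conv_lhs => rw [this]
  rw [wirtb_conj]

/-- geometric meaning of the second affine Toda field: the squared norm of
the skew curvature satisfies `K_{zz}K_{z̄z̄} = (4/H₀²)|∂ω|²|∂̄ω|²/(1+|ω|²)⁴ = 2g·e^{φ₂}`
with `e^{φ₂} = ∂ω ∂̄ω̄/(1+|ω|²)²`. -/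
theorem toda_field_phi2
    (U : Set ℂ) (hU : IsOpen U)
    (H₀ : ℝ) (hH₀ : H₀ ≠ 0)
    (ω : ℂ → ℂ) (hω : ContDiffOn ℝ (⊤ : ℕ∞) ω U) (hωb : ∀ z ∈ U, wirtb ω z ≠ 0)
    (X : ℂ → Fin 3 → ℝ) (hX : ContDiffOn ℝ (⊤ : ℕ∞) X U)
    (hdX : ∀ z ∈ U, wirt (fun w => toC3 (X w)) z = kemPhi (fun _ => H₀) ω z) :
    ∀ z ∈ U,
      cdot3 (wirt (fun w => wirt (fun u => toC3 (X u)) w) z) (toC3 (gaussNormal (ω z))) *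
          cdot3 (wirtb (fun w => wirtb (fun u => toC3 (X u)) w) z) (toC3 (gaussNormal (ω z))) =
        ((4 / H₀ ^ 2 * (‖wirt ω z‖ ^ 2 * ‖wirtb ω z‖ ^ 2) /
            (1 + Complex.normSq (ω z)) ^ 4 : ℝ) : ℂ) ∧
      cdot3 (wirt (fun w => wirt (fun u => toC3 (X u)) w) z) (toC3 (gaussNormal (ω z))) *
          cdot3 (wirtb (fun w => wirtb (fun u => toC3 (X u)) w) z) (toC3 (gaussNormal (ω z))) =
        2 * cdot3 (wirt (fun w => toC3 (X w)) z) (wirtb (fun w => toC3 (X w)) z) *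
          (wirt ω z * wirtb (fun w => (starRingEnd ℂ) (ω w)) z /
            (1 + (Complex.normSq (ω z) : ℂ)) ^ 2) := by
  intro z hz
  have hUz : U ∈ nhds z := hU.mem_nhds hz
  have hH : ((H₀ : ℝ) : ℂ) ≠ 0 := Complex.ofReal_ne_zero.2 hH₀
  set A : ℂ → ℂ := fun w =>
    (starRingEnd ℂ) (wirtb ω w) * (((H₀ : ℝ) : ℂ) * (1 + ω w * (starRingEnd ℂ) (ω w)) ^ 2)⁻¹
    with hAdef
  set V : Fin 3 → ℂ → ℂ := fun i w => ![ω w ^ 2 - 1, Complex.I * (1 + ω w ^ 2), -2 * ω w] i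
    with hVdef
  have hkem : ∀ w, ∀ i : Fin 3, kemPhi (fun _ => H₀) ω w i = A w * V i w := by
    intro w i
    simp only [kemPhi, Pi.smul_apply, smul_eq_mul, hAdef, hVdef]
    rw [wirt_conj, div_eq_mul_inv, ← Complex.mul_conj]
  have hωd : ∀ w ∈ U, DifferentiableAt ℝ ω w := fun w hw =>
    (hω.contDiffAt (hU.mem_nhds hw)).differentiableAt (by simp)
  have hωz : DifferentiableAt ℝ ω z := hωd z hz
  have hXd : ∀ w ∈ U, DifferentiableAt ℝ (fun u => toC3 (X u)) w := by
    intro w hw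
    have h1 : DifferentiableAt ℝ X w := (hX.contDiffAt (hU.mem_nhds hw)).differentiableAt (by simp)
    refine differentiableAt_pi.2 fun i => ?_
    exact Complex.ofRealCLM.differentiableAt.comp w ((differentiableAt_pi.1 h1) i)
  have hden : ∀ w, (1 : ℂ) + ω w * (starRingEnd ℂ) (ω w) ≠ 0 := by
    intro w
    rw [Complex.mul_conj]
    have h0 : (0:ℝ) < 1 + Complex.normSq (ω w) := by
      have := Complex.normSq_nonneg (ω w); linarith
    exact_mod_cast h0.ne'
  have hA : DifferentiableAt ℝ A z := by
    have hD : DifferentiableAt ℝ (fderiv ℝ ω) z :=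
      ((hω.contDiffAt hUz).fderiv_right (m := 1) (by exact WithTop.coe_le_coe.2 (le_top : ((1 + 1 : ℕ) : ℕ∞) ≤ ⊤))).differentiableAt one_ne_zero
    have h1 : DifferentiableAt ℝ (fun w => fderiv ℝ ω w 1) z :=
      hD.clm_apply (differentiableAt_const _)
    have h2 : DifferentiableAt ℝ (fun w => fderiv ℝ ω w Complex.I) z :=
      hD.clm_apply (differentiableAt_const _)
    have hwb : DifferentiableAt ℝ (fun w => wirtb ω w) z := by
      simp only [wirtb]
      exact (h1.add (h2.const_smul Complex.I)).const_smul ((2:ℂ)⁻¹)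
    have hc : DifferentiableAt ℝ (fun w => (starRingEnd ℂ) (wirtb ω w)) z :=
      Complex.conjCLE.toContinuousLinearMap.differentiableAt.comp z hwb
    have hcω : DifferentiableAt ℝ (fun w => (starRingEnd ℂ) (ω w)) z :=
      Complex.conjCLE.toContinuousLinearMap.differentiableAt.comp z hωz
    have hdenD : DifferentiableAt ℝ
        (fun w => (((H₀:ℝ):ℂ) * (1 + ω w * (starRingEnd ℂ) (ω w)) ^ 2)) z :=
      (((differentiableAt_const _).add (hωz.mul hcω)).pow 2).const_mul _
    exact hc.mul (hdenD.inv (mul_ne_zero hH (pow_ne_zero 2 (hden z))))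
  have hVd : ∀ i, DifferentiableAt ℝ (V i) z := by
    intro i
    fin_cases i <;>
      simp only [hVdef, Matrix.cons_val_zero, Matrix.cons_val_one, Matrix.head_cons,
        Matrix.cons_val_two, Matrix.tail_cons]
    · exact (hωz.pow 2).sub (differentiableAt_const 1)
    · exact ((differentiableAt_const 1).add (hωz.pow 2)).const_mul Complex.I
    · exact hωz.const_mul (-2)
  have hAV : DifferentiableAt ℝ (fun w => fun i : Fin 3 => A w * V i w) z :=
    differentiableAt_pi.2 fun i => hA.mul (hVd i)
  have hN : ∀ i : Fin 3, toC3 (gaussNormal (ω z)) i =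
      (1 + ω z * (starRingEnd ℂ) (ω z))⁻¹ *
        ![ω z + (starRingEnd ℂ) (ω z), Complex.I * (ω z - (starRingEnd ℂ) (ω z)),
          ω z * (starRingEnd ℂ) (ω z) - 1] i := by
    intro i
    fin_cases i
    · simp [toC3, gaussNormal, Complex.mul_conj, Complex.add_conj]
    · simp [toC3, gaussNormal, Complex.mul_conj, Complex.sub_conj]
      push_cast
      linear_combination (-2 * (1 + (Complex.normSq (ω z) : ℂ))⁻¹ * ((ω z).im : ℂ)) * Complex.I_sq
    · simp [toC3, gaussNormal, Complex.mul_conj]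
  have hsum : ∑ i : Fin 3, wirt (fun w => A w * V i w) z * toC3 (gaussNormal (ω z)) i =
      A z * (2 * wirt ω z) := by
    have hwV0 : wirt (V 0) z = 2 * ω z * wirt ω z := by
      have he : V 0 = fun w => ω w * ω w - 1 := by
        funext w; simp only [hVdef, Matrix.cons_val_zero]; ring
      rw [he, wirt_sub (hωz.fun_mul hωz) (differentiableAt_const 1), wirt_mul hωz hωz, wirt_const]
      ring
    have hwV1 : wirt (V 1) z = Complex.I * (2 * ω z * wirt ω z) := by
      have he : V 1 = fun w => Complex.I * (1 + ω w * ω w) := by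
        funext w; simp only [hVdef, Matrix.cons_val_one, Matrix.head_cons, Matrix.cons_val_zero]; ring
      rw [he, wirt_const_mul _ ((differentiableAt_const 1).fun_add (hωz.fun_mul hωz)),
        wirt_add (differentiableAt_const 1) (hωz.fun_mul hωz), wirt_const, wirt_mul hωz hωz]
      ring
    have hwV2 : wirt (V 2) z = -2 * wirt ω z := by
      have he : V 2 = fun w => -2 * ω w := by
        funext w; simp only [hVdef, Matrix.cons_val_two, Matrix.tail_cons, Matrix.head_cons]
      rw [he, wirt_const_mul _ hωz]
    rw [Fin.sum_univ_three, wirt_mul hA (hVd 0), wirt_mul hA (hVd 1), wirt_mul hA (hVd 2),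
      hwV0, hwV1, hwV2, hN 0, hN 1, hN 2]
    simp only [hVdef, Matrix.cons_val_zero, Matrix.cons_val_one, Matrix.head_cons,
      Matrix.cons_val_two, Matrix.tail_cons]
    field_simp [hden z]
    linear_combination ((2 * ω z * wirt ω z * A z + (1 + ω z ^ 2) * wirt A z) *
      (ω z - (starRingEnd ℂ) (ω z))) * Complex.I_sq
  have hK : cdot3 (wirt (fun w => wirt (fun u => toC3 (X u)) w) z) (toC3 (gaussNormal (ω z))) =
      A z * (2 * wirt ω z) := by
    have hE1 : wirt (fun w => wirt (fun u => toC3 (X u)) w) z =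
        wirt (fun w => fun i : Fin 3 => A w * V i w) z := by
      refine wirt_congr ?_
      filter_upwards [hUz] with w hw
      rw [hdX w hw]; funext i; exact hkem w i
    calc cdot3 (wirt (fun w => wirt (fun u => toC3 (X u)) w) z) (toC3 (gaussNormal (ω z)))
        = ∑ i : Fin 3, wirt (fun w => A w * V i w) z * toC3 (gaussNormal (ω z)) i := by
          unfold cdot3
          refine Finset.sum_congr rfl fun i _ => ?_
          rw [hE1, wirt_pi hAV i]
      _ = A z * (2 * wirt ω z) := hsum
  have hWb : ∀ w ∈ U, wirtb (fun u => toC3 (X u)) w =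
      fun i : Fin 3 => (starRingEnd ℂ) (A w * V i w) := by
    intro w hw
    funext i
    rw [wirtb_pi (hXd w hw) i]
    have h1 : wirtb (fun u => toC3 (X u) i) w =
        (starRingEnd ℂ) (wirt (fun u => toC3 (X u) i) w) := wirtb_real (fun u => X u i) w
    rw [h1, ← wirt_pi (hXd w hw) i, hdX w hw, hkem w i]
  have hKb : cdot3 (wirtb (fun w => wirtb (fun u => toC3 (X u)) w) z)
      (toC3 (gaussNormal (ω z))) = (starRingEnd ℂ) (A z * (2 * wirt ω z)) := by
    have hE2 : wirtb (fun w => wirtb (fun u => toC3 (X u)) w) z =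
        wirtb (fun w => fun i : Fin 3 => (starRingEnd ℂ) (A w * V i w)) z := by
      refine wirtb_congr ?_
      filter_upwards [hUz] with w hw
      exact hWb w hw
    have hconjD : DifferentiableAt ℝ
        (fun w => fun i : Fin 3 => (starRingEnd ℂ) (A w * V i w)) z :=
      differentiableAt_pi.2 fun i =>
        Complex.conjCLE.toContinuousLinearMap.differentiableAt.comp z (hA.mul (hVd i))
    calc cdot3 (wirtb (fun w => wirtb (fun u => toC3 (X u)) w) z) (toC3 (gaussNormal (ω z)))
        = ∑ i : Fin 3, (starRingEnd ℂ) (wirt (fun w => A w * V i w) z) *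
            toC3 (gaussNormal (ω z)) i := by
          unfold cdot3
          refine Finset.sum_congr rfl fun i _ => ?_
          rw [hE2, wirtb_pi hconjD i, wirtb_conj]
      _ = (starRingEnd ℂ) (∑ i : Fin 3, wirt (fun w => A w * V i w) z *
            toC3 (gaussNormal (ω z)) i) := by
          rw [map_sum]
          refine Finset.sum_congr rfl fun i _ => ?_
          rw [map_mul]
          congr 1
          simp [toC3, Complex.conj_ofReal]
      _ = (starRingEnd ℂ) (A z * (2 * wirt ω z)) := by rw [hsum]
  have hne : (1 : ℂ) + (Complex.normSq (ω z) : ℂ) ≠ 0 := by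
    have h0 : (0:ℝ) < 1 + Complex.normSq (ω z) := by
      have := Complex.normSq_nonneg (ω z); linarith
    exact_mod_cast h0.ne'
  constructor
  · rw [hK, hKb]
    simp only [hAdef, map_mul, map_inv₀, map_pow, map_add, map_one, map_ofNat,
      Complex.conj_conj, Complex.conj_ofReal]
    rw [Complex.mul_conj, mul_comm ((starRingEnd ℂ) (ω z)) (ω z), Complex.mul_conj]
    push_cast
    rw [show ((‖wirt ω z‖ : ℝ) : ℂ)^2 = wirt ω z * (starRingEnd ℂ) (wirt ω z) by
        rw [Complex.mul_conj, ← Complex.ofReal_pow, Complex.sq_norm],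
      show ((‖wirtb ω z‖ : ℝ) : ℂ)^2 = wirtb ω z * (starRingEnd ℂ) (wirtb ω z) by
        rw [Complex.mul_conj, ← Complex.ofReal_pow, Complex.sq_norm]]
    field_simp
    ring
  · rw [hK, hKb, hdX z hz, hWb z hz, wirtb_conj ω z]
    have hgdot : cdot3 (kemPhi (fun _ => H₀) ω z)
        (fun i : Fin 3 => (starRingEnd ℂ) (A z * V i z)) =
        A z * (starRingEnd ℂ) (A z) * (2 * (1 + ω z * (starRingEnd ℂ) (ω z))^2) := by
      unfold cdot3
      rw [Fin.sum_univ_three]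
      simp only [hkem]
      simp only [hVdef, Matrix.cons_val_zero, Matrix.cons_val_one, Matrix.head_cons,
        Matrix.cons_val_two, Matrix.tail_cons, map_mul, map_sub, map_add, map_one, map_pow,
        map_neg, map_ofNat, Complex.conj_I]
      linear_combination (-(A z * (starRingEnd ℂ) (A z) * (1 + ω z ^ 2) *
        (1 + (starRingEnd ℂ) (ω z) ^ 2))) * Complex.I_sq
    rw [hgdot, show ((Complex.normSq (ω z) : ℝ) : ℂ) = ω z * (starRingEnd ℂ) (ω z) from
      (Complex.mul_conj _).symm]
    simp only [map_mul, map_ofNat]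
    field_simp [hden z]
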